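/- Let n ≥ 2 and m ≥ 1 be integers and consider the quiver Γ^1_{A_{nm−1}} of diagonals of the regular (nm+2)-gon. (a) If D is an m-diagonal and there is a sectional path of length m in Γ^1_{A_{nm−1}} from D to a diagonal D′, then D′ is an m-diagonal; likewise if there is a sectional path of length m from a diagonal D to an m-diagonal D′, then D is an m-diagonal; and τ_1^m(D) = τ_m(D) is an m-diagonal whenever D is. (b) For m-diagonals D and D′, there is a sectional path of length m from D to D′ in Γ^1_{A_{nm−1}} if and only if there is an arrow from D to D′ in Γ^m_{A_{n−1}}. Consequently Γ^m_{A_{n−1}} is a connected component of the m-th power (Γ^1_{A_{nm−1}})^m. -/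

import Mathlib

/-- A diagonal of the regular `(n*m+2)`-gon with vertices labelled by
`ZMod (n*m+2)`: an unordered pair `{a,b}` with `b ∉ {a-1, a, a+1}`. -/
def IsDiag (n m : ℕ) (p : Sym2 (ZMod (n*m+2))) : Prop :=
  ∃ a b : ZMod (n*m+2), p = s(a, b) ∧ b ≠ a ∧ b ≠ a + 1 ∧ b ≠ a - 1

/-- An `m`-diagonal: an unordered pair of the form `{i, i+k*m+1}` with
`1 ≤ k ≤ n-1`. -/
def IsMDiagonal (n m : ℕ) (p : Sym2 (ZMod (n*m+2))) : Prop :=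
  ∃ (i : ZMod (n*m+2)) (k : ℕ), 1 ≤ k ∧ k ≤ n - 1 ∧
    p = s(i, i + ((k*m+1 : ℕ) : ZMod (n*m+2)))

/-- An arrow `D → D'` of the quiver `Γ^1_{A_{nm-1}}` of diagonals:
`D` and `D'` are diagonals, and `D'` is obtained from `D = {a,b}` by replacing
the endpoint `b` by `b+1`. -/
def Arrow1 (n m : ℕ) (D D' : Sym2 (ZMod (n*m+2))) : Prop :=
  IsDiag n m D ∧ IsDiag n m D' ∧
    ∃ a b : ZMod (n*m+2), D = s(a, b) ∧ D' = s(a, b + 1)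

/-- The translation `τ_1` of `Γ^1_{A_{nm-1}}`, sending `{a,b}` to `{a-1,b-1}`. -/
def tau1 (n m : ℕ) : Sym2 (ZMod (n*m+2)) → Sym2 (ZMod (n*m+2)) :=
  Sym2.map (fun x => x - 1)

/-- The translation `τ_m` of `Γ^m_{A_{n-1}}`, sending `{a,b}` to `{a-m,b-m}`. -/
def tauM (n m : ℕ) : Sym2 (ZMod (n*m+2)) → Sym2 (ZMod (n*m+2)) :=
  Sym2.map (fun x => x - (m : ZMod (n*m+2)))

/-- `p 0 → p 1 → ⋯ → p m` is a sectional path in `Γ^1_{A_{nm-1}}`. -/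
def IsSectPath1 (n m k : ℕ) (p : Fin (k+1) → Sym2 (ZMod (n*m+2))) : Prop :=
  (∀ s : Fin k, Arrow1 n m (p s.castSucc) (p s.succ)) ∧
  ∀ (s : ℕ) (_ : 1 ≤ s) (h2 : s + 1 ≤ k),
    tau1 n m (p ⟨s+1, by omega⟩) ≠ p ⟨s-1, by omega⟩

/-- An arrow of the `m`-th power `(Γ^1_{A_{nm-1}})^m` from `D` to `D'`:
a sectional path of length `m` from `D` to `D'` in `Γ^1_{A_{nm-1}}`. -/
def PowerArrow (n m : ℕ) (D D' : Sym2 (ZMod (n*m+2))) : Prop :=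
  ∃ p : Fin (m+1) → Sym2 (ZMod (n*m+2)),
    p 0 = D ∧ p (Fin.last m) = D' ∧ IsSectPath1 n m m p

/-- An arrow `D → D'` of `Γ^m_{A_{n-1}}`: `D` and `D'` are `m`-diagonals and
`D'` is obtained from `D = {a,b}` by replacing the endpoint `b` by `b+m`. -/
def ArrowM (n m : ℕ) (D D' : Sym2 (ZMod (n*m+2))) : Prop :=
  IsMDiagonal n m D ∧ IsMDiagonal n m D' ∧
    ∃ a b : ZMod (n*m+2), D = s(a, b) ∧ D' = s(a, b + (m : ZMod (n*m+2)))

/-!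
A sectional path in `Γ^1` never moves the two endpoints of a diagonal alternately: after
`{a, b} → {a, b + 1}`, moving `a` gives `{a + 1, b + 1}`, whose `τ_1` is `{a, b}` again. So a
sectional path of length `m` from `{a, b}` is `{a, b} → {a, b + 1} → ⋯ → {a, b + m}`. For an
`m`-diagonal `{a, a + km + 1}` its end `{a, a + (k + 1)m + 1}` is a diagonal iff `k ≤ n - 2` (for
`k = n - 1` it is `{a, a - 1}`), and then it is again an `m`-diagonal, with every intermediate pair
a diagonal. Connectivity: arrows of `Γ^m` lower `k` to `1`; reading `{i, i + m + 1}` from its other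
endpoint as `{j, j + (n - 1)m + 1}` with `j = i + m + 1`, lowering again and applying `τ_m` gives
`{i + 1, i + m + 2}`.
-/

section MDiagonal

variable {n m : ℕ}

lemma natCast_ne_zero_of_lt {N c : ℕ} (h0 : 0 < c) (hN : c < N) : (c : ZMod N) ≠ 0 := by
  rw [Ne, ZMod.natCast_eq_zero_iff]
  exact fun h => absurd (Nat.le_of_dvd h0 h) (by omega)

lemma isDiag_pair_iff {a b : ZMod (n*m+2)} :
    IsDiag n m s(a, b) ↔ b ≠ a ∧ b ≠ a + 1 ∧ b ≠ a - 1 := by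
  refine ⟨?_, fun h => ⟨a, b, rfl, h⟩⟩
  rintro ⟨a', b', he, h⟩
  rcases Sym2.eq_iff.mp he with ⟨rfl, rfl⟩ | ⟨rfl, rfl⟩
  · exact h
  · obtain ⟨h1, h2, h3⟩ := h
    exact ⟨Ne.symm h1, fun h => h3 (by rw [h]; ring), fun h => h2 (by rw [h]; ring)⟩

lemma isDiag_pair_add_natCast (a : ZMod (n*m+2)) {c : ℕ} (h2 : 2 ≤ c) (hc : c ≤ n*m) :
    IsDiag n m s(a, a + c) := by
  refine isDiag_pair_iff.mpr ⟨fun h => ?_, fun h => ?_, fun h => ?_⟩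
  · exact natCast_ne_zero_of_lt (N := n*m+2) (c := c) (by omega) (by omega)
      (by linear_combination h)
  · refine natCast_ne_zero_of_lt (N := n*m+2) (c := c - 1) (by omega) (by omega) ?_
    rw [Nat.cast_sub (by omega)]
    linear_combination h
  · exact natCast_ne_zero_of_lt (N := n*m+2) (c := c + 1) (by omega) (by omega)
      (by push_cast; linear_combination h)

lemma natCast_offset_add_natCast_offset {k : ℕ} (hk : k ≤ n) :
    ((k*m+1 : ℕ) : ZMod (n*m+2)) + (((n-k)*m+1 : ℕ) : ZMod (n*m+2)) = 0 := by
  have : k*m+1 + ((n-k)*m+1) = n*m+2 := by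
    rw [Nat.sub_mul]
    have := Nat.mul_le_mul_right m hk
    omega
  rw [← Nat.cast_add, this, ZMod.natCast_self]

lemma isMDiagonal_pair_iff {a b : ZMod (n*m+2)} :
    IsMDiagonal n m s(a, b) ↔
      ∃ k, 1 ≤ k ∧ k ≤ n - 1 ∧ b = a + ((k*m+1 : ℕ) : ZMod (n*m+2)) := by
  refine ⟨?_, fun ⟨k, hk1, hk2, hb⟩ => ⟨a, k, hk1, hk2, hb ▸ rfl⟩⟩
  rintro ⟨i, k, hk1, hk2, he⟩
  rcases Sym2.eq_iff.mp he with ⟨rfl, rfl⟩ | ⟨rfl, rfl⟩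
  · exact ⟨k, hk1, hk2, rfl⟩
  · refine ⟨n - k, by omega, by omega, ?_⟩
    linear_combination -natCast_offset_add_natCast_offset (n := n) (m := m) (k := k) (by omega)

lemma IsMDiagonal.isDiag {D : Sym2 (ZMod (n*m+2))} (hm : 1 ≤ m) (hD : IsMDiagonal n m D) :
    IsDiag n m D := by
  obtain ⟨i, k, hk1, hk2, rfl⟩ := hD
  have hlo := Nat.mul_le_mul_right m hk1
  have hhi := Nat.mul_le_mul_right m (show k + 1 ≤ n by omega)
  rw [one_mul] at hlo
  rw [add_one_mul] at hhi
  exact isDiag_pair_add_natCast i (by omega) (by omega)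

lemma IsMDiagonal.map_add {D : Sym2 (ZMod (n*m+2))} (hD : IsMDiagonal n m D) (c : ZMod (n*m+2)) :
    IsMDiagonal n m (Sym2.map (· + c) D) := by
  obtain ⟨i, k, hk1, hk2, rfl⟩ := hD
  exact ⟨i + c, k, hk1, hk2, by rw [Sym2.map_mk, add_right_comm]⟩

lemma iterate_tau1 (j : ℕ) : (tau1 n m)^[j] = Sym2.map (· - (j : ZMod (n*m+2))) := by
  induction j with
  | zero => simp
  | succ j ih =>
    rw [Function.iterate_succ', ih, tau1, ← Sym2.map_comp]
    congr 1
    funext x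
    simp only [Function.comp_apply, Nat.cast_succ]
    ring

lemma pair_add_eq_of_sectional {G : Type*} [AddCommGroup G] {a c a' b' u : G}
    (h : s(a', b') = s(a, c)) (hsect : Sym2.map (· - u) s(a', b' + u) ≠ s(a, c - u)) :
    s(a', b' + u) = s(a, c + u) := by
  rcases Sym2.eq_iff.mp h with ⟨rfl, rfl⟩ | ⟨rfl, rfl⟩
  · rfl
  · exact absurd (by rw [Sym2.map_mk, add_sub_cancel_right, Sym2.eq_swap]) hsect

lemma IsSectPath1.exists_eq_pair {k : ℕ} {p : Fin (k+1) → Sym2 (ZMod (n*m+2))} (hk : 1 ≤ k)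
    (hp : IsSectPath1 n m k p) :
    ∃ a b : ZMod (n*m+2), ∀ j : Fin (k+1), p j = s(a, b + ((j : ℕ) : ZMod (n*m+2))) := by
  obtain ⟨-, -, a, b, h0, h1⟩ := hp.1 ⟨0, hk⟩
  have step : ∀ j (hj : j + 1 ≤ k),
      p ⟨j, by omega⟩ = s(a, b + ((j : ℕ) : ZMod (n*m+2))) ∧
      p ⟨j + 1, by omega⟩ = s(a, b + ((j + 1 : ℕ) : ZMod (n*m+2))) := by
    intro j
    induction j with
    | zero => exact fun _ => ⟨by simpa using h0, by simpa using h1⟩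
    | succ j ih =>
      intro hj
      obtain ⟨hpj, hpj1⟩ := ih (by omega)
      obtain ⟨-, -, a', b', hq0, hq1⟩ := hp.1 ⟨j + 1, hj⟩
      refine ⟨hpj1, ?_⟩
      have hsect : tau1 n m (p ⟨j + 2, by omega⟩) ≠ p ⟨j, by omega⟩ :=
        hp.2 (j + 1) (by omega) hj
      simp only [Fin.castSucc_mk, Fin.succ_mk] at hq0 hq1
      rw [hq1, pair_add_eq_of_sectional (hq0.symm.trans hpj1)]
      · rw [Nat.cast_succ (j + 1), add_assoc]
      · rw [hq1, hpj] at hsect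
        rwa [Nat.cast_succ, ← add_assoc, add_sub_cancel_right]
  refine ⟨a, b, fun ⟨j, hj⟩ => ?_⟩
  rcases j with _ | j
  · exact (step 0 hk).1
  · exact (step j (by omega)).2

lemma PowerArrow.exists_eq_pair {D D' : Sym2 (ZMod (n*m+2))} (hm : 1 ≤ m)
    (h : PowerArrow n m D D') :
    ∃ a b, D = s(a, b) ∧ D' = s(a, b + m) ∧ IsDiag n m D ∧ IsDiag n m D' := by
  obtain ⟨p, rfl, rfl, hp⟩ := h
  obtain ⟨a, b, hpab⟩ := hp.exists_eq_pair hm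
  have hlast : (Fin.last m : Fin (m+1)) = (⟨m - 1, by omega⟩ : Fin m).succ := by
    ext; simp only [Fin.val_last, Fin.val_succ]; omega
  refine ⟨a, b, by simpa using hpab 0, hpab (Fin.last m), (hp.1 ⟨0, hm⟩).1, ?_⟩
  rw [hlast]
  exact (hp.1 _).2.1

lemma powerArrow_pair_of_isDiag {a b : ZMod (n*m+2)}
    (h : ∀ j ≤ m, IsDiag n m s(a, b + (j : ZMod (n*m+2)))) :
    PowerArrow n m s(a, b) s(a, b + m) := by
  refine ⟨fun j => s(a, b + ((j : ℕ) : ZMod (n*m+2))), by simp, rfl,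
    fun j => ⟨h j j.isLt.le, h (j + 1) j.isLt, a, _, rfl,
      by simp only [Fin.val_succ, Fin.val_castSucc, Nat.cast_succ, add_assoc]⟩, ?_⟩
  intro j _ hj heq
  rcases Sym2.eq_iff.mp heq with ⟨h1, -⟩ | ⟨-, h2⟩
  · exact natCast_ne_zero_of_lt (N := n*m+2) (c := 1) one_pos (by omega)
      (by rw [Nat.cast_one]; linear_combination -h1)
  · exact (isDiag_pair_iff.mp (h j (by omega))).1 (by push_cast at h2; linear_combination h2)

lemma exists_offset_of_isDiag_pair_add {a b : ZMod (n*m+2)} (hD : IsMDiagonal n m s(a, b))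
    (hD' : IsDiag n m s(a, b + m)) :
    ∃ k, 1 ≤ k ∧ k + 2 ≤ n ∧ b = a + ((k*m+1 : ℕ) : ZMod (n*m+2)) := by
  obtain ⟨k, hk1, hk2, rfl⟩ := isMDiagonal_pair_iff.mp hD
  refine ⟨k, hk1, ?_, rfl⟩
  by_contra hlt
  have hwrap : k*m+1 + m + 1 = n*m+2 := by
    rw [show n = k + 1 by omega, add_one_mul]; ring
  have hzero : ((k*m+1 : ℕ) : ZMod (n*m+2)) + m + 1 = 0 := by
    exact_mod_cast (congrArg (Nat.cast : ℕ → ZMod (n*m+2)) hwrap).trans (ZMod.natCast_self _)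
  exact (isDiag_pair_iff.mp hD').2.2 (by linear_combination hzero)

lemma isMDiagonal_pair_add {a b : ZMod (n*m+2)} (hD : IsMDiagonal n m s(a, b))
    (hD' : IsDiag n m s(a, b + m)) : IsMDiagonal n m s(a, b + m) := by
  obtain ⟨k, hk1, hk2, rfl⟩ := exists_offset_of_isDiag_pair_add hD hD'
  exact isMDiagonal_pair_iff.mpr ⟨k + 1, by omega, by omega, by push_cast; ring⟩

lemma isMDiagonal_pair_of_add {a b : ZMod (n*m+2)} (hD' : IsMDiagonal n m s(a, b + m))
    (hD : IsDiag n m s(a, b)) : IsMDiagonal n m s(a, b) := by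
  obtain ⟨k, hk1, hk2, hb⟩ := isMDiagonal_pair_iff.mp hD'
  rcases k with _ | _ | k
  · omega
  · exact absurd (by push_cast at hb; linear_combination hb) (isDiag_pair_iff.mp hD).2.1
  · exact isMDiagonal_pair_iff.mpr ⟨k + 1, by omega, by omega, by
      push_cast at hb ⊢; linear_combination hb⟩

lemma ArrowM.powerArrow {D D' : Sym2 (ZMod (n*m+2))} (hm : 1 ≤ m) (h : ArrowM n m D D') :
    PowerArrow n m D D' := by
  obtain ⟨hD, hD', a, b, rfl, rfl⟩ := h
  obtain ⟨k, hk1, hk2, rfl⟩ := exists_offset_of_isDiag_pair_add hD (hD'.isDiag hm)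
  refine powerArrow_pair_of_isDiag fun j hj => ?_
  have hlo := Nat.mul_le_mul_right m hk1
  have hhi := Nat.mul_le_mul_right m hk2
  rw [one_mul] at hlo
  rw [add_mul] at hhi
  rw [add_assoc, ← Nat.cast_add]
  exact isDiag_pair_add_natCast a (by omega) (by omega)

def PowerAdj (n m : ℕ) (X Y : Sym2 (ZMod (n*m+2))) : Prop :=
  PowerArrow n m X Y ∨ PowerArrow n m Y X ∨ Y = tauM n m X ∨ X = tauM n m Y

instance : Std.Symm (PowerAdj n m) := ⟨fun _ _ => by unfold PowerAdj; tauto⟩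

lemma reflTransGen_powerAdj_offset (hm : 1 ≤ m) (i : ZMod (n*m+2)) {k : ℕ} (hk1 : 1 ≤ k)
    (hk2 : k ≤ n - 1) :
    Relation.ReflTransGen (PowerAdj n m) s(i, i + ((m+1 : ℕ) : ZMod (n*m+2)))
      s(i, i + ((k*m+1 : ℕ) : ZMod (n*m+2))) := by
  induction k, hk1 using Nat.le_induction with
  | base => rw [one_mul]
  | succ k hk1 ih =>
    refine (ih (by omega)).tail (Or.inl (ArrowM.powerArrow hm ?_))
    exact ⟨⟨i, k, hk1, by omega, rfl⟩, ⟨i, k + 1, by omega, hk2, rfl⟩, i, _, rfl,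
      by congr 1; push_cast; ring⟩

lemma reflTransGen_powerAdj_add_one (hn : 2 ≤ n) (hm : 1 ≤ m) (i : ZMod (n*m+2)) :
    Relation.ReflTransGen (PowerAdj n m) s(i, i + ((m+1 : ℕ) : ZMod (n*m+2)))
      s(i + 1, i + 1 + ((m+1 : ℕ) : ZMod (n*m+2))) := by
  set j := i + ((m+1 : ℕ) : ZMod (n*m+2))
  have hswap : s(i, j) = s(j, j + (((n-1)*m+1 : ℕ) : ZMod (n*m+2))) := by
    have := natCast_offset_add_natCast_offset (n := n) (m := m) (k := 1) (by omega)
    rw [Sym2.eq_swap]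
    congr 1
    simp only [j]
    push_cast at this ⊢
    linear_combination -this
  rw [hswap]
  refine (symm (reflTransGen_powerAdj_offset hm j (k := n - 1) (by omega) le_rfl)).tail
    (Or.inr (Or.inr (Or.inl ?_)))
  simp only [tauM, Sym2.map_mk, j]
  congr 1 <;> push_cast <;> ring

lemma IsMDiagonal.reflTransGen_powerAdj (hm : 1 ≤ m) {D D' : Sym2 (ZMod (n*m+2))}
    (hD : IsMDiagonal n m D) (hD' : IsMDiagonal n m D') :
    Relation.ReflTransGen (PowerAdj n m) D D' := by
  obtain ⟨i, k, hk1, hk2, rfl⟩ := hD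
  obtain ⟨i', k', hk1', hk2', rfl⟩ := hD'
  have hn : 2 ≤ n := by omega
  have hshift : ∀ t : ℕ, Relation.ReflTransGen (PowerAdj n m)
      s(i, i + ((m+1 : ℕ) : ZMod (n*m+2))) s(i + t, i + t + ((m+1 : ℕ) : ZMod (n*m+2))) := by
    intro t
    induction t with
    | zero => rw [Nat.cast_zero, add_zero]
    | succ t ih => simpa [add_assoc] using ih.trans (reflTransGen_powerAdj_add_one hn hm (i + t))
  obtain ⟨t, ht⟩ := ZMod.natCast_zmod_surjective (i' - i)
  have hi' : i + t = i' := by rw [ht]; ring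
  refine (symm (reflTransGen_powerAdj_offset hm i hk1 hk2)).trans ?_
  exact (hi' ▸ hshift t).trans (reflTransGen_powerAdj_offset hm i' hk1' hk2')

end MDiagonal

theorem stmt13_general (n m : ℕ) (hm : 1 ≤ m) :
    (∀ D D', IsMDiagonal n m D → PowerArrow n m D D' → IsMDiagonal n m D') ∧
    (∀ D D', IsMDiagonal n m D' → PowerArrow n m D D' → IsMDiagonal n m D) ∧
    (∀ D, IsMDiagonal n m D →
      (tau1 n m)^[m] D = tauM n m D ∧ IsMDiagonal n m (tauM n m D)) ∧
    (∀ D, IsMDiagonal n m D →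
      IsMDiagonal n m (Sym2.map (fun x => x + (m : ZMod (n*m+2))) D)) ∧
    (∀ D D', IsMDiagonal n m D → IsMDiagonal n m D' →
      (PowerArrow n m D D' ↔ ArrowM n m D D')) ∧
    (∀ D D', IsMDiagonal n m D → IsMDiagonal n m D' →
      Relation.ReflTransGen
        (fun X Y => PowerArrow n m X Y ∨ PowerArrow n m Y X ∨
          Y = tauM n m X ∨ X = tauM n m Y) D D') := by
  refine ⟨?_, ?_, fun D hD => ⟨?_, ?_⟩, fun D hD => hD.map_add _,
    fun D D' hD hD' => ⟨?_, ?_⟩, fun D D' hD hD' => hD.reflTransGen_powerAdj hm hD'⟩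
  · intro D D' hD h
    obtain ⟨a, b, rfl, rfl, -, hD'⟩ := h.exists_eq_pair hm
    exact isMDiagonal_pair_add hD hD'
  · intro D D' hD' h
    obtain ⟨a, b, rfl, rfl, hD, -⟩ := h.exists_eq_pair hm
    exact isMDiagonal_pair_of_add hD' hD
  · rw [iterate_tau1, tauM]
  · simpa only [tauM, sub_eq_add_neg] using hD.map_add (-m)
  · intro h
    obtain ⟨a, b, rfl, rfl, -, -⟩ := h.exists_eq_pair hm
    exact ⟨hD, hD', a, b, rfl, rfl⟩
  · exact ArrowM.powerArrow hm

/-- (a) If `D` is an `m`-diagonal and there is a sectional path of length `m`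
in `Γ^1_{A_{nm-1}}` from `D` to a diagonal `D'`, then `D'` is an `m`-diagonal,
and vice versa; and `τ_1^m D = τ_m D` is an `m`-diagonal whenever `D` is (as
is its `τ_1^m`-preimage).  (b) For `m`-diagonals `D`, `D'` there is a
sectional path of length `m` from `D` to `D'` in `Γ^1_{A_{nm-1}}` iff there is
an arrow `D → D'` in `Γ^m_{A_{n-1}}`.  Consequently, `Γ^m_{A_{n-1}}` is a
connected component of `(Γ^1_{A_{nm-1}})^m`: the set of `m`-diagonals is
closed under arrows of the power quiver (in both directions) and under the
translation `τ_1^m` (in both directions), and any two `m`-diagonals are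
connected in `(Γ^1_{A_{nm-1}})^m`. -/
theorem stmt13 (n m : ℕ) (hn : 2 ≤ n) (hm : 1 ≤ m) :
    (∀ D D', IsMDiagonal n m D → PowerArrow n m D D' → IsMDiagonal n m D') ∧
    (∀ D D', IsMDiagonal n m D' → PowerArrow n m D D' → IsMDiagonal n m D) ∧
    (∀ D, IsMDiagonal n m D →
      (tau1 n m)^[m] D = tauM n m D ∧ IsMDiagonal n m (tauM n m D)) ∧
    (∀ D, IsMDiagonal n m D →
      IsMDiagonal n m (Sym2.map (fun x => x + (m : ZMod (n*m+2))) D)) ∧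
    (∀ D D', IsMDiagonal n m D → IsMDiagonal n m D' →
      (PowerArrow n m D D' ↔ ArrowM n m D D')) ∧
    (∀ D D', IsMDiagonal n m D → IsMDiagonal n m D' →
      Relation.ReflTransGen
        (fun X Y => PowerArrow n m X Y ∨ PowerArrow n m Y X ∨
          Y = tauM n m X ∨ X = tauM n m Y) D D') :=
  stmt13_general n m hm
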